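/- arXiv:2402.10139 — 2 statements merged into one kernel-verified Lean document; each statement's English description precedes it below -/
import Mathlib

section
/- If f ∈ ℤ[x] is a nonzero polynomial with total bit-length s, then the number of nonzero terms of f is strictly less than 2s / log₂ s (for s ≥ 2). -/
open Polynomial

def intBitlen (a : ℤ) : ℕ := 1 + Nat.clog 2 (a.natAbs + 1)

def natBitlen (e : ℕ) : ℕ := Nat.clog 2 (e + 1)

def polyBitlen (f : ℤ[X]) : ℕ := ∑ i ∈ f.support, (intBitlen (f.coeff i) + natBitlen i)

/-- Sum of a monotone function over a finset of naturals is at least its sum over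
an initial segment of the same size. -/
lemma aux_sum_range_card_le (g : ℕ → ℕ) (hg : Monotone g) :
    ∀ (n : ℕ) (S : Finset ℕ), S.card = n →
      ∑ j ∈ Finset.range n, g j ≤ ∑ i ∈ S, g i := by
  intro n
  induction n with
  | zero => simp
  | succ m ih =>
    intro S hS
    have hne : S.Nonempty := by
      rw [← Finset.card_pos, hS]; omega
    set M := S.max' hne with hM
    have hMem : M ∈ S := S.max'_mem hne
    have hcard : (S.erase M).card = m := by
      rw [Finset.card_erase_of_mem hMem, hS]
      omega
    have hMge : m ≤ M := by
      have hsub : S ⊆ Finset.range (M + 1) := by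
        intro x hx
        exact Finset.mem_range.mpr (Nat.lt_succ_of_le (S.le_max' x hx))
      have := Finset.card_le_card hsub
      rw [hS, Finset.card_range] at this
      omega
    calc ∑ j ∈ Finset.range (m + 1), g j
        = ∑ j ∈ Finset.range m, g j + g m := Finset.sum_range_succ g m
      _ ≤ ∑ i ∈ S.erase M, g i + g M := add_le_add (ih _ hcard) (hg hMge)
      _ = ∑ i ∈ S, g i := Finset.sum_erase_add S g hMem

/-- Exact value of the sum of ceiling logs. -/
lemma aux_clog_sum : ∀ k : ℕ, 1 ≤ k →
    (∑ j ∈ Finset.range k, Nat.clog 2 (j + 1)) + 2 ^ Nat.clog 2 k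
      = k * Nat.clog 2 k + 1 := by
  intro k
  induction k with
  | zero => omega
  | succ n ih =>
    intro _
    rcases Nat.eq_zero_or_pos n with hn0 | hn1
    · subst hn0; simp [Nat.clog_one_right]
    have ihn := ih hn1
    set c := Nat.clog 2 n with hc
    have hle : n ≤ 2 ^ c := Nat.le_pow_clog one_lt_two n
    by_cases h : n + 1 ≤ 2 ^ c
    · have hc' : Nat.clog 2 (n + 1) = c :=
        le_antisymm ((Nat.clog_le_iff_le_pow one_lt_two).mpr h)
          (Nat.clog_mono_right 2 (by omega))
      rw [Finset.sum_range_succ, hc', Nat.succ_mul]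
      linarith [ihn]
    · have hn2 : n = 2 ^ c := le_antisymm hle (by omega)
      have hc' : Nat.clog 2 (n + 1) = c + 1 := by
        apply le_antisymm
        · apply (Nat.clog_le_iff_le_pow one_lt_two).mpr
          rw [pow_succ]
          omega
        · apply (Nat.lt_clog_iff_pow_lt one_lt_two).mpr
          omega
      rw [Finset.sum_range_succ, hc', pow_succ]
      have hexp : (n + 1) * (c + 1) = n * c + n + c + 1 := by ring
      rw [hexp]
      linarith [ihn]

lemma aux_add_two_le_two_pow : ∀ c : ℕ, 2 ≤ c → c + 2 ≤ 2 ^ c := by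
  intro c
  induction c with
  | zero => omega
  | succ n ih =>
    intro h
    rcases Nat.lt_or_ge n 2 with hn | hn
    · interval_cases n
      · omega
      · norm_num
    · have := ih hn
      rw [pow_succ]
      omega

set_option maxHeartbeats 1000000 in
theorem sparsity_lt_bitlen (f : ℤ[X]) (hf : f ≠ 0) (hs : 2 ≤ polyBitlen f) :
    (f.support.card : ℝ) < 2 * polyBitlen f / Real.logb 2 (polyBitlen f) := by
  set k := f.support.card with hk
  set s := polyBitlen f with hsdef
  have hk1 : 1 ≤ k := Finset.card_pos.mpr (Polynomial.support_nonempty.mpr hf)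
  set c := Nat.clog 2 k with hc
  -- Step 1: coefficient bits contribute at least 2 each
  have hcoeff : 2 * k ≤ ∑ i ∈ f.support, intBitlen (f.coeff i) := by
    have hterm : ∀ i ∈ f.support, 2 ≤ intBitlen (f.coeff i) := by
      intro i hi
      have hne : f.coeff i ≠ 0 := Polynomial.mem_support_iff.mp hi
      have h1 : 1 ≤ (f.coeff i).natAbs := Int.natAbs_pos.mpr hne
      have : 0 < Nat.clog 2 ((f.coeff i).natAbs + 1) :=
        Nat.clog_pos one_lt_two (by omega)
      unfold intBitlen
      omega
    have h := Finset.sum_le_sum hterm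
    rw [Finset.sum_const, smul_eq_mul] at h
    calc 2 * k = k * 2 := by ring
      _ ≤ _ := h
  -- Step 2: exponent bits
  have hexp : ∑ j ∈ Finset.range k, Nat.clog 2 (j + 1) ≤ ∑ i ∈ f.support, natBitlen i := by
    apply aux_sum_range_card_le
    · intro a b hab
      exact Nat.clog_mono_right 2 (by omega)
    · rfl
  have hsum : (∑ j ∈ Finset.range k, Nat.clog 2 (j + 1)) + 2 ^ c = k * c + 1 :=
    aux_clog_sum k hk1
  have hsplit : s = ∑ i ∈ f.support, intBitlen (f.coeff i) + ∑ i ∈ f.support, natBitlen i := by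
    rw [hsdef]
    exact Finset.sum_add_distrib
  -- Combined nat bound
  have hkey : 2 * k + k * c + 1 ≤ s + 2 ^ c := by linarith
  -- 2^c ≤ 2k - 1
  have hpow : 2 ^ c ≤ 2 * k - 1 := by
    rcases Nat.lt_or_ge k 2 with hk2 | hk2
    · have hkk : k = 1 := by omega
      rw [hc, hkk]
      simp [Nat.clog_one_right]
    · have h1 : 2 ^ (c - 1) < k := Nat.pow_pred_clog_lt_self one_lt_two hk2
      have h2 : 0 < c := Nat.clog_pos one_lt_two hk2
      have h3 : 2 ^ c = 2 * 2 ^ (c - 1) := by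
        conv_lhs => rw [show c = (c - 1) + 1 by omega]
        rw [pow_succ]; ring
      omega
  have hs1nat : k * c + 2 ≤ s := by
    have h2k : 1 ≤ 2 * k := by omega
    have := hkey
    omega
  -- k ≤ k*c + 2
  have hkS1nat : k ≤ k * c + 2 := by
    rcases Nat.lt_or_ge k 2 with hk2 | hk2
    · omega
    · have h2 : 0 < c := Nat.clog_pos one_lt_two hk2
      nlinarith
  have hkpow : k ≤ 2 ^ c := Nat.le_pow_clog one_lt_two k
  -- Pass to the reals
  have hK0 : (0:ℝ) ≤ (k:ℝ) := Nat.cast_nonneg k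
  have hK1 : (1:ℝ) ≤ (k:ℝ) := by exact_mod_cast hk1
  have hS2 : (2:ℝ) ≤ (s:ℝ) := by exact_mod_cast hs
  have hC0 : (0:ℝ) ≤ (c:ℝ) := Nat.cast_nonneg c
  set K : ℝ := (k:ℝ) with hKdef
  set S : ℝ := (s:ℝ) with hSdef
  set C : ℝ := (c:ℝ) with hCdef
  set S1 : ℝ := K * C + 2 with hS1def
  have hS1pos : 0 < S1 := by
    rw [hS1def]
    nlinarith
  have hS1le : S1 ≤ S := by
    have h : ((k * c + 2 : ℕ) : ℝ) ≤ ((s : ℕ) : ℝ) := Nat.cast_le.mpr hs1nat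
    push_cast at h
    rw [hS1def]; linarith
  have hKS1 : K ≤ S1 := by
    have h : ((k : ℕ) : ℝ) ≤ ((k * c + 2 : ℕ) : ℝ) := Nat.cast_le.mpr hkS1nat
    push_cast at h
    rw [hS1def]; linarith
  have hKpowR : K ≤ (2:ℝ) ^ c := by
    have h : ((k : ℕ) : ℝ) ≤ ((2 ^ c : ℕ) : ℝ) := Nat.cast_le.mpr hkpow
    push_cast at h
    exact h
  have hlog2pos : 0 < Real.log 2 := Real.log_pos (by norm_num)
  have hlog2gt : Real.log 2 > 0.6931471803 := Real.log_two_gt_d9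
  have hSpos : (0:ℝ) < S := by linarith
  have hlogpow : Real.log ((2:ℝ) ^ c) = C * Real.log 2 := by
    rw [Real.log_pow, hCdef]
  -- Claim 1: the inequality at the point S1
  have hclaim1 : K * Real.log S1 < 2 * S1 * Real.log 2 := by
    rcases Nat.lt_or_ge c 2 with hc2 | hc2
    · interval_cases c
      · -- c = 0 forces k = 1
        have hkk : k = 1 := by
          by_contra hne
          have h2 : 2 ≤ k := by omega
          have := Nat.clog_pos one_lt_two h2
          omega
        have hK1' : K = 1 := by rw [hKdef, hkk]; norm_num
        have hC0' : C = 0 := by rw [hCdef]; norm_num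
        have hS1v : S1 = 2 := by rw [hS1def, hK1', hC0']; ring
        rw [hS1v, hK1']
        have : Real.log 2 > 0 := hlog2pos
        nlinarith
      · -- c = 1 forces k = 2
        have hkk : k = 2 := by
          have h1 : k ≤ 2 := by
            have h := hkpow
            simpa using h
          have h2 : 2 ≤ k := by
            by_contra hne
            have : k = 1 := by omega
            rw [this, Nat.clog_one_right] at hc
            omega
          omega
        have hK2 : K = 2 := by rw [hKdef, hkk]; norm_num
        have hC1 : C = 1 := by rw [hCdef]; norm_num
        have hS1v : S1 = 4 := by rw [hS1def, hK2, hC1]; ring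
        have hlog4 : Real.log 4 = 2 * Real.log 2 := by
          rw [show (4:ℝ) = 2 ^ 2 by norm_num, Real.log_pow]
          norm_num
        rw [hS1v, hK2, hlog4]
        nlinarith
    · -- c ≥ 2
      have hC2 : (2:ℝ) ≤ C := by rw [hCdef]; exact_mod_cast hc2
      have hKpos : (0:ℝ) < K := by linarith
      have hlogK : Real.log K ≤ C * Real.log 2 := by
        calc Real.log K ≤ Real.log ((2:ℝ) ^ c) := Real.log_le_log hKpos hKpowR
          _ = C * Real.log 2 := hlogpow
      have hpowC : c + 2 ≤ 2 ^ c := aux_add_two_le_two_pow c hc2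
      have hpowCR : C + 2 ≤ (2:ℝ) ^ c := by
        have h : ((c + 2 : ℕ) : ℝ) ≤ ((2 ^ c : ℕ) : ℝ) := Nat.cast_le.mpr hpowC
        push_cast at h
        rw [hCdef]
        exact_mod_cast h
      have hlogC : Real.log (C + 2) ≤ C * Real.log 2 := by
        calc Real.log (C + 2) ≤ Real.log ((2:ℝ) ^ c) :=
              Real.log_le_log (by linarith) hpowCR
          _ = C * Real.log 2 := hlogpow
      have hS1le' : S1 ≤ K * (C + 2) := by
        rw [hS1def]; nlinarith
      have hlogS1 : Real.log S1 ≤ 2 * C * Real.log 2 := by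
        calc Real.log S1 ≤ Real.log (K * (C + 2)) := Real.log_le_log hS1pos hS1le'
          _ = Real.log K + Real.log (C + 2) :=
              Real.log_mul (by linarith) (by linarith)
          _ ≤ 2 * C * Real.log 2 := by linarith
      have h1 : K * Real.log S1 ≤ K * (2 * C * Real.log 2) :=
        mul_le_mul_of_nonneg_left hlogS1 hK0
      have h2 : 2 * S1 * Real.log 2 = 2 * K * C * Real.log 2 + 4 * Real.log 2 := by
        rw [hS1def]; ring
      nlinarith
  -- Claim 2: monotonicity step from S1 to S
  have hclaim2 : K * Real.log S ≤ K * Real.log S1 + (S - S1) := by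
    have h1 : Real.log (S / S1) ≤ S / S1 - 1 :=
      Real.log_le_sub_one_of_pos (by positivity)
    rw [Real.log_div (by linarith) (by linarith)] at h1
    have h2 : K * (Real.log S - Real.log S1) ≤ K * (S / S1 - 1) :=
      mul_le_mul_of_nonneg_left h1 hK0
    have h3 : K * (S / S1 - 1) ≤ S - S1 := by
      rw [mul_sub, mul_one, ← mul_div_assoc, sub_le_iff_le_add, div_le_iff₀ hS1pos]
      nlinarith [mul_nonneg (sub_nonneg.mpr hKS1) (sub_nonneg.mpr hS1le)]
    nlinarith
  -- Combine
  have hfinal : K * Real.log S < 2 * S * Real.log 2 := by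
    nlinarith [mul_nonneg (sub_nonneg.mpr hS1le) (by linarith : (0:ℝ) ≤ 2 * Real.log 2 - 1)]
  have hlogbpos : 0 < Real.logb 2 S := Real.logb_pos (by norm_num) (by linarith)
  rw [lt_div_iff₀ hlogbpos]
  have heq : K * Real.logb 2 S = K * Real.log S / Real.log 2 := by
    rw [Real.logb]; ring
  rw [heq, div_lt_iff₀ hlog2pos]
  linarith
end

section
/- If f, g ∈ ℤ[x] each have total bit-length at most ℓ ≥ 2, then the total bit-length of fg is at most 4ℓ²/log₂ ℓ, and the height of fg satisfies height(fg) ≤ 4^ℓ · ℓ. -/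
open Polynomial

/-! ### Auxiliary lemmas about `Nat.clog` -/

lemma clog2_mul_le (x y : ℕ) : Nat.clog 2 (x * y) ≤ Nat.clog 2 x + Nat.clog 2 y := by
  rcases Nat.eq_zero_or_pos x with hx | hx
  · simp [hx]
  rcases Nat.eq_zero_or_pos y with hy | hy
  · simp [hy]
  rw [Nat.clog_le_iff_le_pow one_lt_two, pow_add]
  exact Nat.mul_le_mul (Nat.le_pow_clog one_lt_two x) (Nat.le_pow_clog one_lt_two y)

lemma clog2_succ_mul (x y : ℕ) :
    Nat.clog 2 (x * y + 1) ≤ Nat.clog 2 (x + 1) + Nat.clog 2 (y + 1) :=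
  le_trans (Nat.clog_mono_right 2 (by nlinarith)) (clog2_mul_le (x + 1) (y + 1))

lemma sum_succ_le_prod {α : Type*} (s : Finset α) (t : α → ℕ) :
    (∑ x ∈ s, t x) + 1 ≤ ∏ x ∈ s, (t x + 1) := by
  induction s using Finset.cons_induction with
  | empty => simp
  | cons a s ha ih =>
    rw [Finset.sum_cons, Finset.prod_cons]
    have h1 : 1 ≤ ∏ x ∈ s, (t x + 1) := Finset.one_le_prod' (fun x _ => Nat.le_add_left 1 _)
    nlinarith [ih, h1]

lemma clog2_prod_le {α : Type*} (s : Finset α) (t : α → ℕ) :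
    Nat.clog 2 (∏ x ∈ s, t x) ≤ ∑ x ∈ s, Nat.clog 2 (t x) := by
  induction s using Finset.cons_induction with
  | empty => simp [Nat.clog_one_right]
  | cons a s ha ih =>
    rw [Finset.prod_cons, Finset.sum_cons]
    exact le_trans (clog2_mul_le _ _) (Nat.add_le_add_left ih _)

/-- A sum of a monotone function over a finset of naturals is at least the sum over
an initial segment of the same cardinality. -/
lemma sum_range_card_le (u : ℕ → ℕ) (hu : Monotone u) :
    ∀ (n : ℕ) (F : Finset ℕ), F.card = n → ∑ k ∈ Finset.range n, u k ≤ ∑ i ∈ F, u i := by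
  intro n
  induction n with
  | zero => simp
  | succ m ih =>
    intro F hF
    have hne : F.Nonempty := by rw [← Finset.card_pos, hF]; omega
    have hsub : F ⊆ Finset.range (F.max' hne + 1) := fun x hx =>
      Finset.mem_range.mpr (Nat.lt_succ_of_le (Finset.le_max' F x hx))
    have hcard : m + 1 ≤ F.max' hne + 1 := by
      rw [← hF]
      exact le_trans (Finset.card_le_card hsub) (by simp)
    have herase : (F.erase (F.max' hne)).card = m := by
      rw [Finset.card_erase_of_mem (F.max'_mem hne), hF]
      omega
    calc ∑ k ∈ Finset.range (m + 1), u k = ∑ k ∈ Finset.range m, u k + u m :=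
          Finset.sum_range_succ u m
      _ ≤ ∑ i ∈ F.erase (F.max' hne), u i + u (F.max' hne) :=
          Nat.add_le_add (ih _ herase) (hu (by omega))
      _ = ∑ i ∈ F, u i := Finset.sum_erase_add F u (F.max'_mem hne)

lemma clog_sum_lower (a : ℕ) (ha : 1 ≤ a) :
    a * Nat.clog 2 a + 1 ≤ (∑ k ∈ Finset.range a, Nat.clog 2 (k + 1)) + 2 ^ Nat.clog 2 a := by
  induction a, ha using Nat.le_induction with
  | base => simp [Nat.clog_one_right]
  | succ a ha ih =>
    have ha2 : a ≤ 2 ^ Nat.clog 2 a := Nat.le_pow_clog one_lt_two a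
    have hδle : Nat.clog 2 (a + 1) ≤ Nat.clog 2 a + 1 := by
      rw [Nat.clog_le_iff_le_pow one_lt_two, pow_succ]
      omega
    have hγle : Nat.clog 2 a ≤ Nat.clog 2 (a + 1) := Nat.clog_mono_right 2 (Nat.le_succ a)
    rw [Finset.sum_range_succ]
    have hcase : Nat.clog 2 (a + 1) = Nat.clog 2 a ∨
        Nat.clog 2 (a + 1) = Nat.clog 2 a + 1 := by omega
    rcases hcase with hc | hc
    · rw [hc]
      nlinarith [ih]
    · have hlow : 2 ^ Nat.clog 2 a ≤ a := by
        by_contra hcon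
        push_neg at hcon
        have : Nat.clog 2 (a + 1) ≤ Nat.clog 2 a :=
          (Nat.clog_le_iff_le_pow one_lt_two).mpr (by omega)
        omega
      rw [hc, pow_succ]
      nlinarith [ih]

lemma two_mul_le_pow_add_one : ∀ k : ℕ, 1 ≤ k → 2 * k ≤ 2 ^ k + 1 := by
  intro k hk
  induction k, hk using Nat.le_induction with
  | base => norm_num
  | succ k hk ih =>
    have h1 : 2 ≤ 2 ^ k := by
      calc 2 = 2 ^ 1 := rfl
        _ ≤ 2 ^ k := Nat.pow_le_pow_right (by norm_num) hk
    rw [pow_succ]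
    omega

/-- Key counting lemma: if a polynomial-style bit budget `2a + ∑_{k<a} clog(k+1) ≤ ℓ`
holds, then `a * clog₂ ℓ ≤ 2ℓ`. -/
lemma key_aL (a ℓ : ℕ) (hℓ : 2 ≤ ℓ)
    (h : 2 * a + ∑ k ∈ Finset.range a, Nat.clog 2 (k + 1) ≤ ℓ) :
    a * Nat.clog 2 ℓ ≤ 2 * ℓ := by
  rcases Nat.eq_zero_or_pos a with rfl | ha
  · simp
  have hs := clog_sum_lower a ha
  have h2γ : 2 ^ Nat.clog 2 a ≤ 2 * a := by
    rcases eq_or_lt_of_le (show 1 ≤ a from ha) with h1 | h1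
    · rw [← h1]
      norm_num [Nat.clog_one_right]
    · have hp := Nat.pow_pred_clog_lt_self one_lt_two h1
      have hγpos : 0 < Nat.clog 2 a := Nat.clog_pos one_lt_two h1
      have hpe : 2 ^ Nat.clog 2 a = 2 * 2 ^ (Nat.clog 2 a - 1) := by
        rw [← pow_succ']
        congr 1
        omega
      rw [Nat.pred_eq_sub_one] at hp
      omega
  have haγ : a * Nat.clog 2 a + 1 ≤ ℓ := by
    calc a * Nat.clog 2 a + 1 ≤ (∑ k ∈ Finset.range a, Nat.clog 2 (k + 1)) + 2 ^ Nat.clog 2 a :=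
        hs
      _ ≤ (∑ k ∈ Finset.range a, Nat.clog 2 (k + 1)) + 2 * a := by omega
      _ ≤ ℓ := by omega
  rcases le_or_gt (Nat.clog 2 ℓ) (2 * Nat.clog 2 a) with hc | hc
  · calc a * Nat.clog 2 ℓ ≤ a * (2 * Nat.clog 2 a) := Nat.mul_le_mul_left a hc
      _ = 2 * (a * Nat.clog 2 a) := by ring
      _ ≤ 2 * ℓ := by omega
  · have ha2 : a ≤ 2 ^ Nat.clog 2 a := Nat.le_pow_clog one_lt_two a
    have hγleL : Nat.clog 2 a ≤ Nat.clog 2 ℓ := by omega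
    set k := Nat.clog 2 ℓ - Nat.clog 2 a with hk
    have hk1 : 1 ≤ k := by omega
    have hLk : Nat.clog 2 ℓ ≤ 2 * k - 1 := by omega
    have h2k := two_mul_le_pow_add_one k hk1
    have hL2k : Nat.clog 2 ℓ ≤ 2 ^ k := by omega
    have hmul : a * Nat.clog 2 ℓ ≤ 2 ^ Nat.clog 2 a * 2 ^ k := Nat.mul_le_mul ha2 hL2k
    have hsum : 2 ^ Nat.clog 2 a * 2 ^ k = 2 ^ Nat.clog 2 ℓ := by
      rw [← pow_add]
      congr 1
      omega
    have hL1 : 0 < Nat.clog 2 ℓ := Nat.clog_pos one_lt_two hℓ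
    have hpow : 2 ^ (Nat.clog 2 ℓ - 1) < ℓ := by
      have := Nat.pow_pred_clog_lt_self one_lt_two (show 1 < ℓ by omega)
      rwa [Nat.pred_eq_sub_one] at this
    have h2L : 2 ^ Nat.clog 2 ℓ = 2 * 2 ^ (Nat.clog 2 ℓ - 1) := by
      rw [← pow_succ']
      congr 1
      omega
    omega

theorem bitlen_and_height_of_prod (f g : ℤ[X]) (ℓ : ℕ) (hl : 2 ≤ ℓ)
    (hf : polyBitlen f ≤ ℓ) (hg : polyBitlen g ≤ ℓ) :
    ((polyBitlen (f * g) : ℝ) ≤ 4 * ℓ ^ 2 / Real.logb 2 ℓ) ∧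
    (∀ n : ℕ, (|(f * g).coeff n| : ℝ) ≤ 4 ^ ℓ * ℓ) := by
  classical
  set F := f.support with hF
  set G := g.support with hG
  set P : ℕ → Finset (ℕ × ℕ) := fun n => (F ×ˢ G).filter (fun p => p.1 + p.2 = n) with hP
  -- per-term bounds
  have hwf : ∀ i ∈ F, intBitlen (f.coeff i) + natBitlen i ≤ ℓ := fun i hi =>
    le_trans (Finset.single_le_sum (f := fun i => intBitlen (f.coeff i) + natBitlen i)
      (fun _ _ => Nat.zero_le _) hi) hf
  have hwg : ∀ j ∈ G, intBitlen (g.coeff j) + natBitlen j ≤ ℓ := fun j hj =>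
    le_trans (Finset.single_le_sum (f := fun j => intBitlen (g.coeff j) + natBitlen j)
      (fun _ _ => Nat.zero_le _) hj) hg
  have hcf : ∀ i, (f.coeff i).natAbs ≤ 2 ^ ℓ := by
    intro i
    by_cases hi : i ∈ F
    · have h1 := hwf i hi
      have h2 : Nat.clog 2 ((f.coeff i).natAbs + 1) ≤ ℓ := by
        unfold intBitlen natBitlen at h1; omega
      have h3 := (Nat.clog_le_iff_le_pow one_lt_two).mp h2
      omega
    · rw [Polynomial.notMem_support_iff.mp hi]
      simp
  have hcg : ∀ j, (g.coeff j).natAbs ≤ 2 ^ ℓ := by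
    intro j
    by_cases hj : j ∈ G
    · have h1 := hwg j hj
      have h2 : Nat.clog 2 ((g.coeff j).natAbs + 1) ≤ ℓ := by
        unfold intBitlen natBitlen at h1; omega
      have h3 := (Nat.clog_le_iff_le_pow one_lt_two).mp h2
      omega
    · rw [Polynomial.notMem_support_iff.mp hj]
      simp
  -- coefficient formula restricted to P n
  have hcoeff_eq : ∀ n, (f * g).coeff n = ∑ p ∈ P n, f.coeff p.1 * g.coeff p.2 := by
    intro n
    rw [Polynomial.coeff_mul]
    refine (Finset.sum_subset ?_ ?_).symm
    · intro p hp
      rw [Finset.HasAntidiagonal.mem_antidiagonal]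
      exact (Finset.mem_filter.mp hp).2
    · intro x hx hnx
      rw [Finset.HasAntidiagonal.mem_antidiagonal] at hx
      have hxp : x ∉ F ×ˢ G := by
        intro hmem
        exact hnx (Finset.mem_filter.mpr ⟨hmem, hx⟩)
      rw [Finset.mem_product] at hxp
      push_neg at hxp
      by_cases h1 : x.1 ∈ F
      · rw [Polynomial.notMem_support_iff.mp (hxp h1), mul_zero]
      · rw [Polynomial.notMem_support_iff.mp h1, zero_mul]
  have hnatAbs_le : ∀ n, ((f * g).coeff n).natAbs ≤
      ∑ p ∈ P n, (f.coeff p.1).natAbs * (g.coeff p.2).natAbs := by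
    intro n
    rw [hcoeff_eq]
    refine le_trans (nat_abs_sum_le _ _) ?_
    exact le_of_eq (Finset.sum_congr rfl fun p _ => Int.natAbs_mul _ _)
  -- cardinality facts
  have hcardF : 2 * F.card + ∑ i ∈ F, natBitlen i ≤ ℓ := by
    have h1 : ∀ i ∈ F, 2 + natBitlen i ≤ intBitlen (f.coeff i) + natBitlen i := by
      intro i hi
      have h0 : f.coeff i ≠ 0 := Polynomial.mem_support_iff.mp hi
      have h1 : 1 ≤ (f.coeff i).natAbs := Int.natAbs_pos.mpr h0
      have h2 : 0 < Nat.clog 2 ((f.coeff i).natAbs + 1) := Nat.clog_pos one_lt_two (by omega)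
      unfold intBitlen
      omega
    calc 2 * F.card + ∑ i ∈ F, natBitlen i = ∑ i ∈ F, (2 + natBitlen i) := by
          rw [Finset.sum_add_distrib, Finset.sum_const, smul_eq_mul, mul_comm]
      _ ≤ ∑ i ∈ F, (intBitlen (f.coeff i) + natBitlen i) := Finset.sum_le_sum h1
      _ ≤ ℓ := hf
  have hcardG : 2 * G.card + ∑ j ∈ G, natBitlen j ≤ ℓ := by
    have h1 : ∀ j ∈ G, 2 + natBitlen j ≤ intBitlen (g.coeff j) + natBitlen j := by
      intro j hj
      have h0 : g.coeff j ≠ 0 := Polynomial.mem_support_iff.mp hj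
      have h1 : 1 ≤ (g.coeff j).natAbs := Int.natAbs_pos.mpr h0
      have h2 : 0 < Nat.clog 2 ((g.coeff j).natAbs + 1) := Nat.clog_pos one_lt_two (by omega)
      unfold intBitlen
      omega
    calc 2 * G.card + ∑ j ∈ G, natBitlen j = ∑ j ∈ G, (2 + natBitlen j) := by
          rw [Finset.sum_add_distrib, Finset.sum_const, smul_eq_mul, mul_comm]
      _ ≤ ∑ j ∈ G, (intBitlen (g.coeff j) + natBitlen j) := Finset.sum_le_sum h1
      _ ≤ ℓ := hg
  have hmono : Monotone (fun k => Nat.clog 2 (k + 1)) := fun x y h =>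
    Nat.clog_mono_right 2 (by omega)
  have hsF : ∑ k ∈ Finset.range F.card, Nat.clog 2 (k + 1) ≤ ∑ i ∈ F, natBitlen i :=
    sum_range_card_le _ hmono F.card F rfl
  have hsG : ∑ k ∈ Finset.range G.card, Nat.clog 2 (k + 1) ≤ ∑ j ∈ G, natBitlen j :=
    sum_range_card_le _ hmono G.card G rfl
  have haL : F.card * Nat.clog 2 ℓ ≤ 2 * ℓ := key_aL _ _ hl (by omega)
  have hbL : G.card * Nat.clog 2 ℓ ≤ 2 * ℓ := key_aL _ _ hl (by omega)
  -- height bound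
  have hheight : ∀ n, ((f * g).coeff n).natAbs ≤ ℓ * (2 ^ ℓ * 2 ^ ℓ) := by
    intro n
    have hcard : (P n).card ≤ ℓ := by
      have h1 : (P n).card ≤ F.card := by
        refine Finset.card_le_card_of_injOn (fun p => p.1) ?_ ?_
        · intro p hp
          exact (Finset.mem_product.mp (Finset.mem_filter.mp hp).1).1
        · intro p hp q hq hpq
          have hpq1 : p.1 = q.1 := hpq
          have h1 := (Finset.mem_filter.mp hp).2
          have h2 := (Finset.mem_filter.mp hq).2
          have : p.2 = q.2 := by omega
          exact Prod.ext hpq1 this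
      omega
    calc ((f * g).coeff n).natAbs ≤ ∑ p ∈ P n, (f.coeff p.1).natAbs * (g.coeff p.2).natAbs :=
        hnatAbs_le n
      _ ≤ (P n).card * (2 ^ ℓ * 2 ^ ℓ) := by
          rw [← smul_eq_mul]
          exact Finset.sum_le_card_nsmul _ _ _ (fun p _ => Nat.mul_le_mul (hcf _) (hcg _))
      _ ≤ ℓ * (2 ^ ℓ * 2 ^ ℓ) := Nat.mul_le_mul_right _ hcard
  -- main bitlen bound
  have hmain : polyBitlen (f * g) ≤ G.card * polyBitlen f + F.card * polyBitlen g := by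
    have hPne : ∀ n ∈ (f * g).support, (P n).Nonempty := by
      intro n hn
      by_contra hcon
      rw [Finset.not_nonempty_iff_eq_empty] at hcon
      exact Polynomial.mem_support_iff.mp hn (by rw [hcoeff_eq, hcon, Finset.sum_empty])
    have step2 : ∀ n ∈ (f * g).support,
        intBitlen ((f * g).coeff n) + natBitlen n ≤
        ∑ p ∈ P n, ((intBitlen (f.coeff p.1) + natBitlen p.1) +
          (intBitlen (g.coeff p.2) + natBitlen p.2)) := by
      intro n hn
      obtain ⟨p0, hp0⟩ := hPne n hn
      have hA : Nat.clog 2 (((f * g).coeff n).natAbs + 1) ≤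
          ∑ p ∈ P n, (Nat.clog 2 ((f.coeff p.1).natAbs + 1) +
            Nat.clog 2 ((g.coeff p.2).natAbs + 1)) := by
        calc Nat.clog 2 (((f * g).coeff n).natAbs + 1)
            ≤ Nat.clog 2 ((∑ p ∈ P n, (f.coeff p.1).natAbs * (g.coeff p.2).natAbs) + 1) :=
              Nat.clog_mono_right 2 (by have := hnatAbs_le n; omega)
          _ ≤ Nat.clog 2 (∏ p ∈ P n, ((f.coeff p.1).natAbs * (g.coeff p.2).natAbs + 1)) :=
              Nat.clog_mono_right 2 (sum_succ_le_prod _ _)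
          _ ≤ ∑ p ∈ P n, Nat.clog 2 ((f.coeff p.1).natAbs * (g.coeff p.2).natAbs + 1) :=
              clog2_prod_le _ _
          _ ≤ _ := Finset.sum_le_sum (fun p _ => clog2_succ_mul _ _)
      have hB : 1 + natBitlen n ≤ ∑ p ∈ P n, (1 + natBitlen p.1 + natBitlen p.2) := by
        have hp0' := Finset.mem_filter.mp hp0
        have h1 : natBitlen n ≤ natBitlen p0.1 + natBitlen p0.2 := by
          unfold natBitlen
          calc Nat.clog 2 (n + 1) ≤ Nat.clog 2 ((p0.1 + 1) * (p0.2 + 1)) :=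
              Nat.clog_mono_right 2 (by have := hp0'.2; nlinarith)
            _ ≤ Nat.clog 2 (p0.1 + 1) + Nat.clog 2 (p0.2 + 1) := clog2_mul_le _ _
        calc 1 + natBitlen n ≤ 1 + natBitlen p0.1 + natBitlen p0.2 := by omega
          _ ≤ _ := Finset.single_le_sum (f := fun p => 1 + natBitlen p.1 + natBitlen p.2)
              (fun _ _ => Nat.zero_le _) hp0
      have hAB := Nat.add_le_add hB hA
      rw [← Finset.sum_add_distrib] at hAB
      have hfinal : (∑ p ∈ P n, ((1 + natBitlen p.1 + natBitlen p.2) +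
          (Nat.clog 2 ((f.coeff p.1).natAbs + 1) + Nat.clog 2 ((g.coeff p.2).natAbs + 1)))) ≤
          ∑ p ∈ P n, ((intBitlen (f.coeff p.1) + natBitlen p.1) +
            (intBitlen (g.coeff p.2) + natBitlen p.2)) := by
        refine Finset.sum_le_sum ?_
        intro p _
        unfold intBitlen
        omega
      have hlhs : intBitlen ((f * g).coeff n) + natBitlen n =
          (1 + natBitlen n) + Nat.clog 2 (((f * g).coeff n).natAbs + 1) := by
        unfold intBitlen
        omega
      omega
    have step1 : (f * g).support ⊆ (F ×ˢ G).image (fun p => p.1 + p.2) := by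
      intro n hn
      obtain ⟨p, hp⟩ := hPne n hn
      have hp' := Finset.mem_filter.mp hp
      exact Finset.mem_image.mpr ⟨p, hp'.1, hp'.2⟩
    calc polyBitlen (f * g)
        = ∑ n ∈ (f * g).support, (intBitlen ((f * g).coeff n) + natBitlen n) := rfl
      _ ≤ ∑ n ∈ (f * g).support, ∑ p ∈ P n, ((intBitlen (f.coeff p.1) + natBitlen p.1) +
            (intBitlen (g.coeff p.2) + natBitlen p.2)) := Finset.sum_le_sum step2
      _ ≤ ∑ n ∈ (F ×ˢ G).image (fun p => p.1 + p.2), ∑ p ∈ P n,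
            ((intBitlen (f.coeff p.1) + natBitlen p.1) +
             (intBitlen (g.coeff p.2) + natBitlen p.2)) :=
          Finset.sum_le_sum_of_subset step1
      _ = ∑ p ∈ F ×ˢ G, ((intBitlen (f.coeff p.1) + natBitlen p.1) +
            (intBitlen (g.coeff p.2) + natBitlen p.2)) :=
          Finset.sum_fiberwise_of_maps_to (fun p hp => Finset.mem_image_of_mem _ hp) _
      _ = ∑ i ∈ F, ∑ j ∈ G, ((intBitlen (f.coeff i) + natBitlen i) +
            (intBitlen (g.coeff j) + natBitlen j)) := Finset.sum_product _ _ _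
      _ = G.card * polyBitlen f + F.card * polyBitlen g := by
          unfold polyBitlen
          rw [← hF, ← hG]
          simp only [Finset.sum_add_distrib, Finset.sum_const, smul_eq_mul, ← Finset.mul_sum]
          ring
  have hnat : polyBitlen (f * g) * Nat.clog 2 ℓ ≤ 4 * ℓ ^ 2 := by
    calc polyBitlen (f * g) * Nat.clog 2 ℓ
        ≤ (G.card * polyBitlen f + F.card * polyBitlen g) * Nat.clog 2 ℓ :=
          Nat.mul_le_mul_right _ hmain
      _ ≤ (G.card * ℓ + F.card * ℓ) * Nat.clog 2 ℓ :=
          Nat.mul_le_mul_right _ (Nat.add_le_add (Nat.mul_le_mul_left _ hf)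
            (Nat.mul_le_mul_left _ hg))
      _ = (G.card * Nat.clog 2 ℓ) * ℓ + (F.card * Nat.clog 2 ℓ) * ℓ := by ring
      _ ≤ (2 * ℓ) * ℓ + (2 * ℓ) * ℓ :=
          Nat.add_le_add (Nat.mul_le_mul_right _ hbL) (Nat.mul_le_mul_right _ haL)
      _ = 4 * ℓ ^ 2 := by ring
  constructor
  · have hℓR : (1 : ℝ) < (ℓ : ℝ) := by exact_mod_cast (show 1 < ℓ by omega)
    have hlogpos : 0 < Real.logb 2 (ℓ : ℝ) := Real.logb_pos one_lt_two hℓR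
    rw [le_div_iff₀ hlogpos]
    have hlogle : Real.logb 2 (ℓ : ℝ) ≤ (Nat.clog 2 ℓ : ℝ) := by
      have h1 : (ℓ : ℝ) ≤ 2 ^ (Nat.clog 2 ℓ) := by
        exact_mod_cast Nat.le_pow_clog one_lt_two ℓ
      calc Real.logb 2 (ℓ : ℝ) ≤ Real.logb 2 ((2 : ℝ) ^ (Nat.clog 2 ℓ)) :=
          Real.logb_le_logb_of_le one_lt_two (by positivity) h1
        _ = (Nat.clog 2 ℓ : ℝ) * Real.logb 2 2 := Real.logb_pow 2 2 _
        _ = (Nat.clog 2 ℓ : ℝ) := by rw [Real.logb_self_eq_one one_lt_two]; ring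
    calc (polyBitlen (f * g) : ℝ) * Real.logb 2 (ℓ : ℝ)
        ≤ (polyBitlen (f * g) : ℝ) * (Nat.clog 2 ℓ : ℝ) :=
          mul_le_mul_of_nonneg_left hlogle (by positivity)
      _ ≤ 4 * (ℓ : ℝ) ^ 2 := by exact_mod_cast hnat
  · intro n
    have h1 : |((f * g).coeff n : ℝ)| = (((f * g).coeff n).natAbs : ℝ) := by
      rw [← Int.cast_abs, Int.abs_eq_natAbs, Int.cast_natCast]
    rw [h1]
    have h2 : (((f * g).coeff n).natAbs : ℝ) ≤ ((ℓ * (2 ^ ℓ * 2 ^ ℓ) : ℕ) : ℝ) := by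
      exact_mod_cast hheight n
    have h3 : ((ℓ * (2 ^ ℓ * 2 ^ ℓ) : ℕ) : ℝ) = 4 ^ ℓ * ℓ := by
      have h4 : (4 : ℝ) = 2 * 2 := by norm_num
      push_cast
      rw [h4, mul_pow]
      ring
    rw [← h3]
    exact h2
end
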